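/- arXiv:1706.08459 — 2 statements merged into one kernel-verified Lean document; each statement's English description precedes it below -/
import Mathlib

section
/- Under the same setting (exact data, randomized Kaczmarz with row i chosen with probability ‖a_i‖²/‖A‖_F²), the high-frequency error satisfies E[‖P_H e_{k+1}‖² | e_k] ≤ c₂ ‖P_L e_k‖² + (1 + c₂) ‖P_H e_k‖², where c₂ = (Σ_{j=L+1}^r σ_j²)/‖A‖_F². -/
/-!
Expanding `‖P_H (e - t aᵢ)‖²` and averaging over `i` gives `‖P_H e‖²`, minus twice a cross
term, plus a quadratic term. The cross term is `‖A P_H e‖² / F ≥ 0`, because `AᵀA = V SᵀS Vᵀ`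
commutes with `P_H = V D_H Vᵀ`. The quadratic term is at most `‖e‖² Σᵢ ‖P_H aᵢ‖² / F` by
Cauchy–Schwarz, and `Σᵢ ‖P_H aᵢ‖² = tr (AᵀA P_H) = Σ_{j ≥ L} σⱼ²`. Finally
`‖e‖² = ‖P_L e‖² + ‖P_H e‖²`.
-/

open Matrix Finset

namespace Matrix

variable {m n : Type*} [Fintype m] [Fintype n]

section Projection

variable {P : Matrix m m ℝ}

theorem IsSymm.mulVec_dotProduct (hP : P.IsSymm) (x y : m → ℝ) :
    (P *ᵥ x) ⬝ᵥ y = x ⬝ᵥ (P *ᵥ y) := by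
  rw [dotProduct_mulVec, ← vecMul_transpose, hP.eq]

theorem IsSymm.mulVec_dotProduct_mulVec_self (hP : P.IsSymm) (hP2 : IsIdempotentElem P)
    (x : m → ℝ) : (P *ᵥ x) ⬝ᵥ (P *ᵥ x) = x ⬝ᵥ (P *ᵥ x) := by
  rw [hP.mulVec_dotProduct, mulVec_mulVec, hP2.eq]

theorem IsSymm.dotProduct_mulVec_self_nonneg (hP : P.IsSymm) (hP2 : IsIdempotentElem P)
    (x : m → ℝ) : 0 ≤ x ⬝ᵥ (P *ᵥ x) := by
  rw [← hP.mulVec_dotProduct_mulVec_self hP2]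
  exact Finset.sum_nonneg fun i _ => mul_self_nonneg _

theorem IsSymm.mulVec_sub_smul_dotProduct_self (hP : P.IsSymm) (hP2 : IsIdempotentElem P)
    (x a : m → ℝ) (t : ℝ) :
    (P *ᵥ (x - t • a)) ⬝ᵥ (P *ᵥ (x - t • a)) =
      (P *ᵥ x) ⬝ᵥ (P *ᵥ x) - 2 * t * (a ⬝ᵥ (P *ᵥ x)) + t ^ 2 * (a ⬝ᵥ (P *ᵥ a)) := by
  have hsymm : x ⬝ᵥ (P *ᵥ a) = a ⬝ᵥ (P *ᵥ x) := by
    rw [← hP.mulVec_dotProduct, dotProduct_comm]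
  rw [hP.mulVec_dotProduct_mulVec_self hP2, hP.mulVec_dotProduct_mulVec_self hP2]
  simp only [mulVec_sub, mulVec_smul, dotProduct_sub, sub_dotProduct, dotProduct_smul,
    smul_dotProduct, smul_eq_mul, hsymm]
  ring

end Projection

theorem sq_dotProduct_le (a x : m → ℝ) : (a ⬝ᵥ x) ^ 2 ≤ (a ⬝ᵥ a) * (x ⬝ᵥ x) :=
  Finset.sum_sq_le_sum_mul_sum_of_sq_le_mul _ (fun i _ => mul_self_nonneg (a i))
    (fun i _ => mul_self_nonneg (x i)) fun i _ => by rw [mul_mul_mul_comm, sq]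

theorem mulVec_dotProduct_mulVec (A : Matrix n m ℝ) (x y : m → ℝ) :
    (A *ᵥ x) ⬝ᵥ (A *ᵥ y) = x ⬝ᵥ ((Aᵀ * A) *ᵥ y) := by
  rw [dotProduct_mulVec, ← vecMul_transpose, vecMul_vecMul, ← dotProduct_mulVec]

theorem sum_row_dotProduct_mulVec_row_eq_trace (A : Matrix n m ℝ) (P : Matrix m m ℝ)
    (hP : P.IsSymm) :
    ∑ i, A i ⬝ᵥ (P *ᵥ A i) = trace (Aᵀ * A * P) := by
  have hrow : ∀ i, A i ⬝ᵥ (P *ᵥ A i) = (A * Pᵀ * Aᵀ) i i := fun i => by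
    simp only [dotProduct, mulVec, mul_apply, transpose_apply, Finset.mul_sum, Finset.sum_mul]
    exact Finset.sum_congr rfl fun _ _ => Finset.sum_congr rfl fun _ _ => by ring
  rw [Finset.sum_congr rfl fun i _ => hrow i]
  show trace _ = _
  rw [trace_mul_cycle, hP.eq]

end Matrix

section Kaczmarz

variable {m n : Type*} [Fintype m] [Fintype n] {P : Matrix m m ℝ}

-- For `a = 0` the division gives `0`, so the step is the identity.
noncomputable def kaczmarzStep (a x : m → ℝ) : m → ℝ := x - ((a ⬝ᵥ x) / (a ⬝ᵥ a)) • a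

theorem Matrix.IsSymm.mul_kaczmarzStep_dotProduct_self (hP : P.IsSymm) (hP2 : IsIdempotentElem P)
    (a x : m → ℝ) (F : ℝ) :
    (a ⬝ᵥ a) / F * ((P *ᵥ kaczmarzStep a x) ⬝ᵥ (P *ᵥ kaczmarzStep a x)) =
      (a ⬝ᵥ a) / F * ((P *ᵥ x) ⬝ᵥ (P *ᵥ x)) - 2 / F * ((a ⬝ᵥ x) * (a ⬝ᵥ (P *ᵥ x))) +
        (a ⬝ᵥ x) ^ 2 / ((a ⬝ᵥ a) * F) * (a ⬝ᵥ (P *ᵥ a)) := by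
  rw [kaczmarzStep, hP.mulVec_sub_smul_dotProduct_self hP2]
  by_cases ha : a = 0
  · simp [ha]
  have ha' : a ⬝ᵥ a ≠ 0 := dotProduct_self_eq_zero.not.mpr ha
  field_simp

theorem sum_dotProduct_mul_dotProduct_mulVec_nonneg (A : Matrix n m ℝ) (hP : P.IsSymm)
    (hP2 : IsIdempotentElem P) (hcomm : Commute (Aᵀ * A) P) (x : m → ℝ) :
    0 ≤ ∑ i, (A i ⬝ᵥ x) * (A i ⬝ᵥ (P *ᵥ x)) := by
  have hsum : ∑ i, (A i ⬝ᵥ x) * (A i ⬝ᵥ (P *ᵥ x)) = (A *ᵥ x) ⬝ᵥ (A *ᵥ (P *ᵥ x)) := rfl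
  rw [hsum, mulVec_dotProduct_mulVec, mulVec_mulVec, ← hP2.eq, ← Matrix.mul_assoc,
    hcomm.eq, Matrix.mul_assoc, ← mulVec_mulVec, ← hP.mulVec_dotProduct,
    ← mulVec_mulVec, ← mulVec_dotProduct_mulVec]
  exact Finset.sum_nonneg fun i _ => mul_self_nonneg _

theorem sum_mul_kaczmarzStep_dotProduct_self_le (A : Matrix n m ℝ) (hP : P.IsSymm)
    (hP2 : IsIdempotentElem P) (hcomm : Commute (Aᵀ * A) P) {F : ℝ}
    (hF : F = ∑ i, A i ⬝ᵥ A i) (x : m → ℝ) :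
    ∑ i, (A i ⬝ᵥ A i) / F * ((P *ᵥ kaczmarzStep (A i) x) ⬝ᵥ (P *ᵥ kaczmarzStep (A i) x)) ≤
      (P *ᵥ x) ⬝ᵥ (P *ᵥ x) + trace (Aᵀ * A * P) / F * (x ⬝ᵥ x) := by
  have hPx : 0 ≤ (P *ᵥ x) ⬝ᵥ (P *ᵥ x) := hP.mulVec_dotProduct_mulVec_self hP2 x ▸
    hP.dotProduct_mulVec_self_nonneg hP2 x
  rcases (show 0 ≤ F from hF ▸ Finset.sum_nonneg fun i _ => Finset.sum_nonneg
    fun k _ => mul_self_nonneg (A i k)).eq_or_lt with hF0 | hFpos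
  · simpa [← hF0] using hPx
  -- the cross term is `‖A P x‖²`, since `AᵀA` commutes with `P`
  have hcross := sum_dotProduct_mul_dotProduct_mulVec_nonneg A hP hP2 hcomm x
  have hquad : ∀ i, (A i ⬝ᵥ x) ^ 2 / ((A i ⬝ᵥ A i) * F) * (A i ⬝ᵥ (P *ᵥ A i)) ≤
      (x ⬝ᵥ x) / F * (A i ⬝ᵥ (P *ᵥ A i)) := fun i => by
    refine mul_le_mul_of_nonneg_right ?_ (hP.dotProduct_mulVec_self_nonneg hP2 _)
    rw [← div_div]
    exact div_le_div_of_nonneg_right (div_le_of_le_mul₀ (dotProduct_self_star_nonneg (A i))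
      (dotProduct_self_star_nonneg x) ((sq_dotProduct_le (A i) x).trans_eq (mul_comm _ _)))
      hFpos.le
  calc _ = (P *ᵥ x) ⬝ᵥ (P *ᵥ x) - 2 / F * ∑ i, (A i ⬝ᵥ x) * (A i ⬝ᵥ (P *ᵥ x)) +
        ∑ i, (A i ⬝ᵥ x) ^ 2 / ((A i ⬝ᵥ A i) * F) * (A i ⬝ᵥ (P *ᵥ A i)) := by
        simp only [hP.mul_kaczmarzStep_dotProduct_self hP2, Finset.sum_add_distrib,
          Finset.sum_sub_distrib, ← Finset.sum_mul, ← Finset.sum_div, ← hF, ← Finset.mul_sum,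
          div_self hFpos.ne', one_mul]
    _ ≤ (P *ᵥ x) ⬝ᵥ (P *ᵥ x) + ∑ i, (x ⬝ᵥ x) / F * (A i ⬝ᵥ (P *ᵥ A i)) := by
        gcongr ?_ + ?_
        · exact sub_le_self _ (mul_nonneg (by positivity) hcross)
        · exact Finset.sum_le_sum fun i _ => hquad i
    _ = _ := by rw [← Finset.mul_sum, sum_row_dotProduct_mulVec_row_eq_trace A P hP]; ring

end Kaczmarz

section FrequencyProjection

variable {m : Type*} [Fintype m] [DecidableEq m] {V : Matrix m m ℝ}

noncomputable def freqProj (V : Matrix m m ℝ) (s : Finset m) : Matrix m m ℝ :=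
  V * diagonal (fun j => if j ∈ s then 1 else 0) * Vᵀ

theorem conj_diagonal_mul_conj_diagonal (hV : Vᵀ * V = 1) (d₁ d₂ : m → ℝ) :
    V * diagonal d₁ * Vᵀ * (V * diagonal d₂ * Vᵀ) = V * diagonal (d₁ * d₂) * Vᵀ := by
  rw [Matrix.mul_assoc, ← Matrix.mul_assoc Vᵀ, ← Matrix.mul_assoc Vᵀ, hV, Matrix.one_mul,
    ← Matrix.mul_assoc, Matrix.mul_assoc V, diagonal_mul_diagonal]
  rfl

theorem freqProj_isSymm (s : Finset m) : (freqProj V s).IsSymm := by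
  simp [freqProj, Matrix.IsSymm, transpose_mul, Matrix.mul_assoc]

theorem freqProj_isIdempotentElem (hV : Vᵀ * V = 1) (s : Finset m) :
    IsIdempotentElem (freqProj V s) := by
  rw [IsIdempotentElem, freqProj, conj_diagonal_mul_conj_diagonal hV]
  congr 3
  ext j
  by_cases hj : j ∈ s <;> simp [hj]

theorem commute_conj_diagonal_freqProj (hV : Vᵀ * V = 1) (d : m → ℝ) (s : Finset m) :
    Commute (V * diagonal d * Vᵀ) (freqProj V s) := by
  rw [Commute, SemiconjBy, freqProj, conj_diagonal_mul_conj_diagonal hV,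
    conj_diagonal_mul_conj_diagonal hV, mul_comm]

theorem freqProj_add_freqProj_compl (hV : V * Vᵀ = 1) (s : Finset m) :
    freqProj V s + freqProj V sᶜ = 1 := by
  have hsum : (fun j => (if j ∈ s then 1 else 0) + if j ∈ sᶜ then 1 else 0) =
      fun _ => (1 : ℝ) := by
    ext j
    by_cases hj : j ∈ s <;> simp [hj]
  rw [freqProj, freqProj, ← Matrix.add_mul, ← Matrix.mul_add, diagonal_add, hsum,
    diagonal_one, Matrix.mul_one, hV]

theorem trace_conj_diagonal_mul_freqProj (hV : Vᵀ * V = 1) (d : m → ℝ) (s : Finset m) :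
    trace (V * diagonal d * Vᵀ * freqProj V s) = ∑ j ∈ s, d j := by
  rw [freqProj, conj_diagonal_mul_conj_diagonal hV, trace_mul_cycle, hV, Matrix.one_mul,
    trace_diagonal]
  simp [mul_ite]

theorem dotProduct_self_eq_freqProj_compl_add_freqProj (hV : Vᵀ * V = 1) (hV' : V * Vᵀ = 1)
    (s : Finset m) (x : m → ℝ) :
    x ⬝ᵥ x = (freqProj V sᶜ *ᵥ x) ⬝ᵥ (freqProj V sᶜ *ᵥ x) +
      (freqProj V s *ᵥ x) ⬝ᵥ (freqProj V s *ᵥ x) := by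
  rw [(freqProj_isSymm _).mulVec_dotProduct_mulVec_self (freqProj_isIdempotentElem hV _),
    (freqProj_isSymm _).mulVec_dotProduct_mulVec_self (freqProj_isIdempotentElem hV _),
    ← dotProduct_add, ← add_mulVec, add_comm, freqProj_add_freqProj_compl hV', one_mulVec]

theorem freqProj_mulVec_apply (s : Finset m) (z : m → ℝ) (k : m) :
    (freqProj V s *ᵥ z) k = ∑ j ∈ s, (∑ l, V l j * z l) * V k j := by
  rw [freqProj, ← mulVec_mulVec, ← mulVec_mulVec]
  simp [mulVec, dotProduct, diagonal, mul_comm]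

end FrequencyProjection

theorem Matrix.transpose_mul_self_eq_of_eq_mul_mul_transpose {l m n : Type*} [Fintype l]
    [Fintype m] [Fintype n] [DecidableEq n] {A : Matrix n m ℝ} {U : Matrix n n ℝ}
    {S : Matrix n l ℝ} {V : Matrix m l ℝ} (hU : Uᵀ * U = 1) (hA : A = U * S * Vᵀ) :
    Aᵀ * A = V * (Sᵀ * S) * Vᵀ := by
  simp only [hA, transpose_mul, transpose_transpose, Matrix.mul_assoc]
  rw [← Matrix.mul_assoc Uᵀ, hU, Matrix.one_mul]

section RectangularDiagonal

variable {n m : ℕ} {S : Matrix (Fin n) (Fin m) ℝ} {σ : ℕ → ℝ}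

theorem transpose_mul_self_eq_diagonal_of_apply_eq_ite
    (hS : ∀ i j, S i j = if (i : ℕ) = (j : ℕ) then σ (i : ℕ) else 0) :
    Sᵀ * S = diagonal fun j : Fin m => if (j : ℕ) < n then σ j ^ 2 else 0 := by
  ext j j'
  simp only [mul_apply, transpose_apply, hS, diagonal_apply]
  rw [Fin.sum_univ_eq_sum_range
    (fun i => (if i = (j : ℕ) then σ i else 0) * if i = (j' : ℕ) then σ i else 0) n]
  simp only [ite_mul, zero_mul, Finset.sum_ite_eq', mem_range]
  by_cases hjj : (j : ℕ) = j' <;> simp [Fin.ext_iff, hjj, sq]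

theorem sum_filter_le_ite_lt_eq_sum_Ico (L : ℕ) :
    ∑ j ∈ univ.filter (fun j : Fin m => L ≤ (j : ℕ)), (if (j : ℕ) < n then σ j ^ 2 else 0) =
      ∑ j ∈ Ico L (min m n), σ j ^ 2 := by
  have hIco : Ico L (min m n) = (range m).filter (fun j => L ≤ j ∧ j < n) := by
    ext j
    simp only [mem_Ico, mem_filter, mem_range, Nat.lt_min]
    omega
  rw [hIco, Finset.sum_filter, Finset.sum_filter,
    Fin.sum_univ_eq_sum_range (fun j => if L ≤ j then if j < n then σ j ^ 2 else 0 else 0)]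
  simp only [ite_and]

end RectangularDiagonal

theorem rkm_preasymptotic_high_exact_general (n m : ℕ) (A : Matrix (Fin n) (Fin m) ℝ)
    (U : Matrix (Fin n) (Fin n) ℝ) (V : Matrix (Fin m) (Fin m) ℝ)
    (S : Matrix (Fin n) (Fin m) ℝ) (σ : ℕ → ℝ)
    (hU : Uᵀ * U = 1)
    (hV : Vᵀ * V = 1) (hV' : V * Vᵀ = 1)
    (hS : ∀ i j, S i j = if (i : ℕ) = (j : ℕ) then σ (i : ℕ) else 0)
    (hA : A = U * S * Vᵀ)
    (L : ℕ)
    (PL PH : (Fin m → ℝ) → (Fin m → ℝ))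
    (hPL : ∀ z k, PL z k = ∑ j ∈ Finset.univ.filter (fun j : Fin m => (j : ℕ) < L),
      (∑ l, V l j * z l) * V k j)
    (hPH : ∀ z k, PH z k = ∑ j ∈ Finset.univ.filter (fun j : Fin m => L ≤ (j : ℕ)),
      (∑ l, V l j * z l) * V k j)
    (F : ℝ) (hF : F = ∑ i, ∑ k, A i k ^ 2)
    (c₂ : ℝ)
    (hc₂ : c₂ = (∑ j ∈ Finset.Ico L (min m n), σ j ^ 2) / F)
    (ek : Fin m → ℝ) (e' : Fin n → Fin m → ℝ)
    (he' : ∀ i k, e' i k = ek k - ((A i ⬝ᵥ ek) / (∑ l, A i l ^ 2)) * A i k) :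
    ∑ i, ((∑ l, A i l ^ 2) / F) * (∑ k, (PH (e' i)) k ^ 2) ≤
      c₂ * (∑ k, (PL ek) k ^ 2) + (1 + c₂) * (∑ k, (PH ek) k ^ 2) := by
  set H := univ.filter fun j : Fin m => L ≤ (j : ℕ)
  have hsq : ∀ v : Fin m → ℝ, ∑ k, v k ^ 2 = v ⬝ᵥ v := fun v => by
    simp only [dotProduct, sq]
  have hPH' : PH = (freqProj V H *ᵥ ·) := by
    ext z k
    rw [hPH, freqProj_mulVec_apply]
  have hPL' : PL = (freqProj V Hᶜ *ᵥ ·) := by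
    ext z k
    rw [hPL, freqProj_mulVec_apply, Finset.compl_filter]
    simp only [not_le]
  have he'' : e' = fun i => kaczmarzStep (A i) ek := by
    ext i k
    simp [he', kaczmarzStep, hsq]
  have hAA := (transpose_mul_self_eq_of_eq_mul_mul_transpose hU hA).trans
    (by rw [transpose_mul_self_eq_diagonal_of_apply_eq_ite hS])
  have htrace : trace (Aᵀ * A * freqProj V H) / F = c₂ := by
    rw [hAA, trace_conj_diagonal_mul_freqProj hV, sum_filter_le_ite_lt_eq_sum_Ico, hc₂]
  have hsplit : ek ⬝ᵥ ek = (PL ek) ⬝ᵥ (PL ek) + (PH ek) ⬝ᵥ (PH ek) := by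
    rw [hPL', hPH', dotProduct_self_eq_freqProj_compl_add_freqProj hV hV']
  have hmain := sum_mul_kaczmarzStep_dotProduct_self_le A (freqProj_isSymm H)
    (freqProj_isIdempotentElem hV H) (hAA ▸ commute_conj_diagonal_freqProj hV _ H)
    (by simpa only [hsq] using hF) ek
  rw [htrace, hsplit] at hmain
  simp only [hsq, he'', hPH'] at hmain ⊢
  linarith

/-- Theorem 3.3 (high-frequency part), exact data:
`E[‖P_H e_{k+1}‖² | e_k] ≤ c₂‖P_L e_k‖² + (1+c₂)‖P_H e_k‖²` with
`c₂ = (Σ_{j=L+1}^r σ_j²)/‖A‖_F²` (0-based indices `j ∈ [L, r)`). -/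
theorem rkm_preasymptotic_high_exact (n m : ℕ) (A : Matrix (Fin n) (Fin m) ℝ)
    (U : Matrix (Fin n) (Fin n) ℝ) (V : Matrix (Fin m) (Fin m) ℝ)
    (S : Matrix (Fin n) (Fin m) ℝ) (σ : ℕ → ℝ)
    (hU : Uᵀ * U = 1) (hU' : U * Uᵀ = 1)
    (hV : Vᵀ * V = 1) (hV' : V * Vᵀ = 1)
    (hS : ∀ i j, S i j = if (i : ℕ) = (j : ℕ) then σ (i : ℕ) else 0)
    (hσmono : ∀ i j : ℕ, i ≤ j → σ j ≤ σ i) (hσnonneg : ∀ j, 0 ≤ σ j)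
    (hA : A = U * S * Vᵀ)
    (hrows : ∀ i, A i ≠ 0)
    (L : ℕ) (hL1 : 1 ≤ L) (hLm : L ≤ m)
    (PL PH : (Fin m → ℝ) → (Fin m → ℝ))
    (hPL : ∀ z k, PL z k = ∑ j ∈ Finset.univ.filter (fun j : Fin m => (j : ℕ) < L),
      (∑ l, V l j * z l) * V k j)
    (hPH : ∀ z k, PH z k = ∑ j ∈ Finset.univ.filter (fun j : Fin m => L ≤ (j : ℕ)),
      (∑ l, V l j * z l) * V k j)
    (F : ℝ) (hF : F = ∑ i, ∑ k, A i k ^ 2)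
    (c₁ c₂ : ℝ) (hc₁ : c₁ = σ (L - 1) ^ 2 / F)
    (hc₂ : c₂ = (∑ j ∈ Finset.Ico L (min m n), σ j ^ 2) / F)
    (ek : Fin m → ℝ) (e' : Fin n → Fin m → ℝ)
    (he' : ∀ i k, e' i k = ek k - ((A i ⬝ᵥ ek) / (∑ l, A i l ^ 2)) * A i k) :
    ∑ i, ((∑ l, A i l ^ 2) / F) * (∑ k, (PH (e' i)) k ^ 2) ≤
      c₂ * (∑ k, (PL ek) k ^ 2) + (1 + c₂) * (∑ k, (PH ek) k ^ 2) :=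
  rkm_preasymptotic_high_exact_general n m A U V S σ hU hV hV' hS hA L PL PH hPL hPH F hF c₂ hc₂ ek
    e' he'
end

section
/- For complementary orthogonal projections P_L, P_H on ℝ^m, a nonzero a ∈ ℝ^m, and e = e_L + e_H with e_L = P_L e, e_H = P_H e, the quantity I := (‖P_H a‖² ⟨P_L a, e_L⟩ − ‖P_L a‖² ⟨P_H a, e_H⟩)/‖a‖² satisfies I² ≤ ‖P_H a‖² ‖e‖². -/
/-!
Write `p, q` for the two components of `a` and `r, s` for those of `e`. Orthogonality gives
`‖a‖² = ‖p‖² + ‖q‖²` and `‖e‖² = ‖r‖² + ‖s‖²`, and Cauchy–Schwarz bounds `⟪p, r⟫² ≤ ‖p‖²‖r‖²`,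
`⟪q, s⟫² ≤ ‖q‖²‖s‖²`. What remains is an inequality between six real numbers: the numerator
squared is at most `‖p‖²‖q‖²‖a‖²‖e‖²`, and `‖p‖² ≤ ‖a‖²`.
-/

open Matrix

theorem sq_mul_sub_mul_div_add_le {α β x y u v : ℝ} (hα : 0 ≤ α) (hβ : 0 ≤ β)
    (hu : 0 ≤ u) (hv : 0 ≤ v) (hx : x ^ 2 ≤ α * u) (hy : y ^ 2 ≤ β * v) :
    ((β * x - α * y) / (α + β)) ^ 2 ≤ β * (u + v) := by
  rcases (add_nonneg hα hβ).eq_or_lt with hαβ | hαβ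
  · rw [← hαβ, div_zero, zero_pow two_ne_zero]
    positivity
  have hx' := sub_nonneg.mpr hx
  have hy' := sub_nonneg.mpr hy
  -- `(α + β) αβ (u + v) - (βx - αy)² = (β² + αβ)(αu - x²) + (α² + αβ)(βv - y²) + αβ (x + y)²`
  have key : (β * x - α * y) ^ 2 ≤ α * β * (α + β) * (u + v) := by
    nlinarith [mul_nonneg (mul_nonneg hα hβ) (sq_nonneg (x + y)), mul_nonneg (sq_nonneg β) hx',
      mul_nonneg (sq_nonneg α) hy', mul_nonneg (mul_nonneg hα hβ) hx',
      mul_nonneg (mul_nonneg hα hβ) hy']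
  rw [div_pow, div_le_iff₀ (by positivity)]
  calc (β * x - α * y) ^ 2 ≤ α * β * (α + β) * (u + v) := key
    _ ≤ (α + β) * β * (α + β) * (u + v) := by gcongr; linarith
    _ = β * (u + v) * (α + β) ^ 2 := by ring

section InnerProductSpace

variable {E : Type*} [NormedAddCommGroup E] [InnerProductSpace ℝ E]

open RealInnerProductSpace

theorem real_inner_sq_le_norm_sq_mul_norm_sq (x y : E) : ⟪x, y⟫ ^ 2 ≤ ‖x‖ ^ 2 * ‖y‖ ^ 2 := by
  rw [← mul_pow, ← sq_abs]
  exact pow_le_pow_left₀ (abs_nonneg _) (abs_real_inner_le_norm x y) 2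

theorem cross_term_sq_le_of_inner_eq_zero {p q r s : E} (hpq : ⟪p, q⟫ = 0) (hrs : ⟪r, s⟫ = 0) :
    ((‖q‖ ^ 2 * ⟪p, r⟫ - ‖p‖ ^ 2 * ⟪q, s⟫) / ‖p + q‖ ^ 2) ^ 2 ≤ ‖q‖ ^ 2 * ‖r + s‖ ^ 2 := by
  rw [norm_add_sq_real, hpq, norm_add_sq_real r, hrs, mul_zero, add_zero, add_zero]
  exact sq_mul_sub_mul_div_add_le (by positivity) (by positivity) (by positivity) (by positivity)
    (real_inner_sq_le_norm_sq_mul_norm_sq p r) (real_inner_sq_le_norm_sq_mul_norm_sq q s)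

end InnerProductSpace

theorem dotProduct_mulVec_mulVec_eq_zero {n R : Type*} [Fintype n] [CommSemiring R]
    {A B : Matrix n n R} (hA : Aᵀ = A) (hAB : A * B = 0) (u v : n → R) :
    A *ᵥ u ⬝ᵥ B *ᵥ v = 0 := by
  rw [dotProduct_mulVec, ← hA, mulVec_transpose, vecMul_vecMul, hAB, vecMul_zero, zero_dotProduct]

open RealInnerProductSpace in
theorem rkm_cross_term_bound_general (m : ℕ) (PL PH : Matrix (Fin m) (Fin m) ℝ)
    (hsum : PL + PH = 1) (hLsymm : PLᵀ = PL)
    (horth : PL * PH = 0)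
    (a : Fin m → ℝ)
    (e eL eH : Fin m → ℝ) (heL : eL = PL.mulVec e) (heH : eH = PH.mulVec e)
    (I : ℝ)
    (hI : I = ((∑ k, (PH.mulVec a) k ^ 2) * ((PL.mulVec a) ⬝ᵥ eL)
      - (∑ k, (PL.mulVec a) k ^ 2) * ((PH.mulVec a) ⬝ᵥ eH)) / (∑ k, a k ^ 2)) :
    I ^ 2 ≤ (∑ k, (PH.mulVec a) k ^ 2) * (∑ k, e k ^ 2) := by
  have hinner (v w : Fin m → ℝ) : ⟪WithLp.toLp 2 v, WithLp.toLp 2 w⟫ = v ⬝ᵥ w := by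
    rw [EuclideanSpace.inner_toLp_toLp, star_trivial, dotProduct_comm]
  have hnorm (v : Fin m → ℝ) : ‖WithLp.toLp 2 v‖ ^ 2 = ∑ k, v k ^ 2 :=
    EuclideanSpace.real_norm_sq_eq _
  have hsplit (w : Fin m → ℝ) :
      WithLp.toLp 2 (PL *ᵥ w) + WithLp.toLp 2 (PH *ᵥ w) = WithLp.toLp 2 w := by
    rw [← WithLp.toLp_add, ← add_mulVec, hsum, one_mulVec]
  have hperp (v w : Fin m → ℝ) : ⟪WithLp.toLp 2 (PL *ᵥ v), WithLp.toLp 2 (PH *ᵥ w)⟫ = 0 := by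
    rw [hinner]
    exact dotProduct_mulVec_mulVec_eq_zero hLsymm horth v w
  have hbound := cross_term_sq_le_of_inner_eq_zero (hperp a a) (hperp e e)
  rwa [hsplit, hsplit, hnorm, hnorm, hnorm, hnorm, hinner, hinner, ← heL, ← heH, ← hI] at hbound

/-- For complementary orthogonal projections `P_L, P_H` and `e = e_L + e_H`,
`I := (‖P_H a‖²⟨P_L a, e_L⟩ − ‖P_L a‖²⟨P_H a, e_H⟩)/‖a‖²` satisfies `I² ≤ ‖P_H a‖²‖e‖²`. -/
theorem rkm_cross_term_bound (m : ℕ) (PL PH : Matrix (Fin m) (Fin m) ℝ)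
    (hsum : PL + PH = 1) (hLsymm : PLᵀ = PL) (hHsymm : PHᵀ = PH)
    (hLidem : PL * PL = PL) (hHidem : PH * PH = PH) (horth : PL * PH = 0)
    (a : Fin m → ℝ) (ha : a ≠ 0)
    (e eL eH : Fin m → ℝ) (heL : eL = PL.mulVec e) (heH : eH = PH.mulVec e)
    (I : ℝ)
    (hI : I = ((∑ k, (PH.mulVec a) k ^ 2) * ((PL.mulVec a) ⬝ᵥ eL)
      - (∑ k, (PL.mulVec a) k ^ 2) * ((PH.mulVec a) ⬝ᵥ eH)) / (∑ k, a k ^ 2)) :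
    I ^ 2 ≤ (∑ k, (PH.mulVec a) k ^ 2) * (∑ k, e k ^ 2) :=
  rkm_cross_term_bound_general m PL PH hsum hLsymm horth a e eL eH heL heH I hI
end
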